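/- The point (K₀₁, 0, 0, 0) is an equilibrium of the Gaussian co-evolutionary model, and the Jacobian matrix (the 4×4 matrix of partial derivatives of the right-hand side) at this point has eigenvalues −r₁, r₂ − d + e·a₀·K₀₁/(1 + a₀·h·K₀₁), −r₁·σ₁²/σ_{K₁}², and −σ₂²·e·a₀·K₀₁/(σ_a²·(1 + a₀·h·K₀₁)²). Consequently, if r₂ + e·a₀·K₀₁/(1 + a₀·h·K₀₁) < d then all four eigenvalues are negative, while if r₂ + e·a₀·K₀₁/(1 + a₀·h·K₀₁) > d the Jacobian has a positive eigenvalue. -/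

import Mathlib

open Polynomial

/-- Right-hand side of the Gaussian co-evolutionary host–parasite model in
(x₁, x₂, u₁, u₂), with trait functions K₁(v) = K₀₁ exp(−v²/(2σK₁²)),
K₂(v) = K₀₂ exp(−v²/(2σK₂²)), a(v₁,v₂) = a₀ exp(−(v₁−v₂)²/(2σa²)). -/
noncomputable def coevoRHS (r₁ r₂ K₀₁ K₀₂ a₀ h e d σ₁ σ₂ σK₁ σK₂ σa : ℝ)
    (p : ℝ × ℝ × ℝ × ℝ) : ℝ × ℝ × ℝ × ℝ :=
  let x₁ := p.1; let x₂ := p.2.1; let u₁ := p.2.2.1; let u₂ := p.2.2.2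
  let K₁ := K₀₁ * Real.exp (-(u₁ ^ 2) / (2 * σK₁ ^ 2))
  let K₂ := K₀₂ * Real.exp (-(u₂ ^ 2) / (2 * σK₂ ^ 2))
  let a := a₀ * Real.exp (-((u₁ - u₂) ^ 2) / (2 * σa ^ 2))
  (x₁ * (r₁ * (1 - x₁ / K₁) - a * x₂ / (1 + h * a * x₁)),
   x₂ * (e * a * x₁ / (1 + h * a * x₁) - d + r₂ * (1 - x₂ / K₂)),
   σ₁ ^ 2 * (-(r₁ * x₁ * u₁) / (σK₁ ^ 2 * K₁)
     + (u₁ - u₂) * x₂ * a / (σa ^ 2 * (1 + h * a * x₁) ^ 2)),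
   σ₂ ^ 2 * (-(r₂ * x₂ * u₂) / (σK₂ ^ 2 * K₂)
     + e * (u₁ - u₂) * x₁ * a / (σa ^ 2 * (1 + h * a * x₁) ^ 2)))

/-- The Jacobian matrix (matrix of partial derivatives) of a vector field on ℝ⁴. -/
noncomputable def coevoJac (F : ℝ × ℝ × ℝ × ℝ → ℝ × ℝ × ℝ × ℝ) (p : ℝ × ℝ × ℝ × ℝ) :
    Matrix (Fin 4) (Fin 4) ℝ :=
  let comp : Fin 4 → (ℝ × ℝ × ℝ × ℝ) → ℝ :=
    ![fun q => q.1, fun q => q.2.1, fun q => q.2.2.1, fun q => q.2.2.2]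
  let basis : Fin 4 → ℝ × ℝ × ℝ × ℝ :=
    ![(1, 0, 0, 0), (0, 1, 0, 0), (0, 0, 1, 0), (0, 0, 0, 1)]
  Matrix.of fun i j => fderiv ℝ (fun q => comp i (F q)) p (basis j)

/-! At the host-only state p = (K₀₁, 0, 0, 0) the x₂-component of the field carries the factor
x₂, and the trait components are built from the factors x₂, u₁, u₂ and u₁ − u₂, so they vanish
identically along most coordinate lines through p. Hence the Jacobian is block triangular for the
order x₁ < x₂ < u₂ < u₁ of the coordinates, and its characteristic polynomial is ∏ (X − Jᵢᵢ).
Along its own coordinate line every component has the form t · φ(t) with φ continuous, so the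
diagonal entry Jᵢᵢ is just φ(0) and no quotient ever has to be differentiated. -/

namespace Matrix

variable {n α R : Type*} [Fintype n] [DecidableEq n] [CommRing R] [LinearOrder α]

theorem BlockTriangular.charpoly_of_injective {M : Matrix n n R} {b : n → α}
    (hM : M.BlockTriangular b) (hb : Function.Injective b) :
    M.charpoly = ∏ i, (X - C (M.diag i)) := by
  rw [hM.charpoly, Finset.prod_image fun i _ j _ hij => hb hij]
  refine Finset.prod_congr rfl fun i _ => ?_
  let : Unique {j // b j = b i} := ⟨⟨⟨i, rfl⟩⟩, fun j => Subtype.ext (hb j.2)⟩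
  rw [Matrix.charpoly, det_unique]
  simp only [toSquareBlock_def, charmatrix_apply_eq, of_apply]
  rfl

end Matrix

section LineDerivative

variable {𝕜 E F : Type*} [NontriviallyNormedField 𝕜] [NormedAddCommGroup E] [NormedSpace 𝕜 E]
  [NormedAddCommGroup F] [NormedSpace 𝕜 F]

theorem hasDerivAt_id_smul_of_continuousAt {φ : 𝕜 → F} (hφ : ContinuousAt φ 0) :
    HasDerivAt (fun t => t • φ t) (φ 0) 0 := by
  rw [hasDerivAt_iff_tendsto_slope_zero]
  refine (hφ.tendsto.mono_left nhdsWithin_le_nhds).congr' ?_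
  filter_upwards [self_mem_nhdsWithin] with t ht
  rw [zero_add, zero_smul, sub_zero, inv_smul_smul₀ ht]

theorem fderiv_apply_eq_of_forall_eq_smul {f : E → F} {p v : E} {φ : 𝕜 → F}
    (hf : DifferentiableAt 𝕜 f p) (hφ : ContinuousAt φ 0)
    (hfφ : ∀ t : 𝕜, f (p + t • v) = t • φ t) : fderiv 𝕜 f p v = φ 0 :=
  (hf.hasFDerivAt.hasLineDerivAt v).unique <| by
    rw [HasLineDerivAt, funext hfφ]
    exact hasDerivAt_id_smul_of_continuousAt hφ

-- Where `f` is not differentiable, `fderiv` is `0` by convention.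
theorem fderiv_apply_eq_zero_of_forall_eq_zero {f : E → F} {p v : E}
    (hf : ∀ t : 𝕜, f (p + t • v) = 0) : fderiv 𝕜 f p v = 0 := by
  by_cases hd : DifferentiableAt 𝕜 f p
  · simpa using fderiv_apply_eq_of_forall_eq_smul hd continuousAt_const (φ := fun _ => 0)
      (by simpa using hf)
  · rw [fderiv_zero_of_not_differentiableAt hd]
    rfl

end LineDerivative

section Coevo

variable {r₁ r₂ K₀₁ K₀₂ a₀ h e d σ₁ σ₂ σK₁ σK₂ σa : ℝ}

theorem coevoRHS_differentiableAt (hK₀₁ : K₀₁ ≠ 0) (hK₀₂ : K₀₂ ≠ 0) (ha₀ : 0 ≤ a₀)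
    (hh : 0 ≤ h) (hσK₁ : σK₁ ≠ 0) (hσK₂ : σK₂ ≠ 0) (hσa : σa ≠ 0) {q : ℝ × ℝ × ℝ × ℝ}
    (hq : 0 ≤ q.1) :
    DifferentiableAt ℝ (coevoRHS r₁ r₂ K₀₁ K₀₂ a₀ h e d σ₁ σ₂ σK₁ σK₂ σa) q := by
  unfold coevoRHS
  simp only [div_eq_mul_inv]
  fun_prop (disch := positivity)

theorem coevoRHS_hostOnly_eq_zero (hK₀₁ : K₀₁ ≠ 0) :
    coevoRHS r₁ r₂ K₀₁ K₀₂ a₀ h e d σ₁ σ₂ σK₁ σK₂ σa (K₀₁, 0, 0, 0) = (0, 0, 0, 0) := by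
  simp [coevoRHS, hK₀₁]

theorem coevoJac_hostOnly_blockTriangular :
    (coevoJac (coevoRHS r₁ r₂ K₀₁ K₀₂ a₀ h e d σ₁ σ₂ σK₁ σK₂ σa) (K₀₁, 0, 0, 0)).BlockTriangular
      ![0, 1, 3, 2] := by
  intro i j hij
  fin_cases i <;> fin_cases j <;>
    first
    | exact absurd hij (by decide)
    | exact fderiv_apply_eq_zero_of_forall_eq_zero fun t => by simp [coevoRHS]

theorem coevoJac_hostOnly_diag (hK₀₁ : 0 < K₀₁) (hK₀₂ : K₀₂ ≠ 0) (ha₀ : 0 ≤ a₀) (hh : 0 ≤ h)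
    (hσK₁ : σK₁ ≠ 0) (hσK₂ : σK₂ ≠ 0) (hσa : σa ≠ 0) :
    (coevoJac (coevoRHS r₁ r₂ K₀₁ K₀₂ a₀ h e d σ₁ σ₂ σK₁ σK₂ σa) (K₀₁, 0, 0, 0)).diag =
      ![-r₁, r₂ - d + e * a₀ * K₀₁ / (1 + a₀ * h * K₀₁), -(r₁ * σ₁ ^ 2 / σK₁ ^ 2),
        -(σ₂ ^ 2 * e * a₀ * K₀₁ / (σa ^ 2 * (1 + a₀ * h * K₀₁) ^ 2))] := by
  have hF : DifferentiableAt ℝ (coevoRHS r₁ r₂ K₀₁ K₀₂ a₀ h e d σ₁ σ₂ σK₁ σK₂ σa)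
      (K₀₁, 0, 0, 0) :=
    coevoRHS_differentiableAt hK₀₁.ne' hK₀₂ ha₀ hh hσK₁ hσK₂ hσa hK₀₁.le
  ext i
  fin_cases i
  · refine (fderiv_apply_eq_of_forall_eq_smul hF.fst (φ := fun t => -(r₁ * (K₀₁ + t) / K₀₁))
      (by fun_prop) fun t => ?_).trans ?_
    · simp [coevoRHS, field]
    · simp [hK₀₁.ne']
  · refine (fderiv_apply_eq_of_forall_eq_smul hF.snd.fst
      (φ := fun t => e * a₀ * K₀₁ / (1 + a₀ * h * K₀₁) - d + r₂ * (1 - t / K₀₂))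
      (by fun_prop) fun t => ?_).trans ?_
    · simp [coevoRHS, mul_comm h a₀]
    · simp only [Fin.mk_one, Matrix.cons_val_one, Matrix.cons_val_zero, zero_div, sub_zero,
        mul_one]
      ring
  · refine (fderiv_apply_eq_of_forall_eq_smul hF.snd.snd.fst
      (φ := fun t => -(r₁ * σ₁ ^ 2 / (σK₁ ^ 2 * Real.exp (-(t ^ 2) / (2 * σK₁ ^ 2)))))
      (by fun_prop (disch := positivity)) fun t => ?_).trans ?_
    · simp [coevoRHS, field]
    · simp
  · refine (fderiv_apply_eq_of_forall_eq_smul hF.snd.snd.snd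
      (φ := fun t => -(σ₂ ^ 2 * e * a₀ * K₀₁ * Real.exp (-(t ^ 2) / (2 * σa ^ 2)) /
        (σa ^ 2 * (1 + a₀ * h * K₀₁ * Real.exp (-(t ^ 2) / (2 * σa ^ 2))) ^ 2)))
      (by fun_prop (disch := positivity)) fun t => ?_).trans ?_
    · simp [coevoRHS, field]
    · simp

theorem coevoJac_hostOnly_charpoly (hK₀₁ : 0 < K₀₁) (hK₀₂ : K₀₂ ≠ 0) (ha₀ : 0 ≤ a₀)
    (hh : 0 ≤ h) (hσK₁ : σK₁ ≠ 0) (hσK₂ : σK₂ ≠ 0) (hσa : σa ≠ 0) :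
    (coevoJac (coevoRHS r₁ r₂ K₀₁ K₀₂ a₀ h e d σ₁ σ₂ σK₁ σK₂ σa) (K₀₁, 0, 0, 0)).charpoly
      = (X - C (-r₁)) * (X - C (r₂ - d + e * a₀ * K₀₁ / (1 + a₀ * h * K₀₁)))
        * (X - C (-(r₁ * σ₁ ^ 2 / σK₁ ^ 2)))
        * (X - C (-(σ₂ ^ 2 * e * a₀ * K₀₁ / (σa ^ 2 * (1 + a₀ * h * K₀₁) ^ 2)))) := by
  rw [coevoJac_hostOnly_blockTriangular.charpoly_of_injective (by decide),
    coevoJac_hostOnly_diag hK₀₁ hK₀₂ ha₀ hh hσK₁ hσK₂ hσa, Fin.prod_univ_four]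
  rfl

end Coevo

theorem coevo_hostOnly_equilibrium_jacobian_general
    (r₁ r₂ K₀₁ K₀₂ a₀ h e d σ₁ σ₂ σK₁ σK₂ σa : ℝ)
    (hr₁ : 0 < r₁) (hK₀₁ : 0 < K₀₁) (hK₀₂ : 0 < K₀₂)
    (ha₀ : 0 < a₀) (hh : 0 < h) (he : 0 < e)
    (hσ₁ : 0 < σ₁) (hσ₂ : 0 < σ₂) (hσK₁ : 0 < σK₁) (hσK₂ : 0 < σK₂) (hσa : 0 < σa) :
    coevoRHS r₁ r₂ K₀₁ K₀₂ a₀ h e d σ₁ σ₂ σK₁ σK₂ σa (K₀₁, 0, 0, 0) = (0, 0, 0, 0) ∧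
    (coevoJac (coevoRHS r₁ r₂ K₀₁ K₀₂ a₀ h e d σ₁ σ₂ σK₁ σK₂ σa)
        (K₀₁, 0, 0, 0)).charpoly
      = (X - C (-r₁)) * (X - C (r₂ - d + e * a₀ * K₀₁ / (1 + a₀ * h * K₀₁)))
        * (X - C (-(r₁ * σ₁ ^ 2 / σK₁ ^ 2)))
        * (X - C (-(σ₂ ^ 2 * e * a₀ * K₀₁ / (σa ^ 2 * (1 + a₀ * h * K₀₁) ^ 2)))) ∧
    (r₂ + e * a₀ * K₀₁ / (1 + a₀ * h * K₀₁) < d →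
      (-r₁ < 0 ∧ r₂ - d + e * a₀ * K₀₁ / (1 + a₀ * h * K₀₁) < 0 ∧
       -(r₁ * σ₁ ^ 2 / σK₁ ^ 2) < 0 ∧
       -(σ₂ ^ 2 * e * a₀ * K₀₁ / (σa ^ 2 * (1 + a₀ * h * K₀₁) ^ 2)) < 0)) ∧
    (r₂ + e * a₀ * K₀₁ / (1 + a₀ * h * K₀₁) > d →
      0 < r₂ - d + e * a₀ * K₀₁ / (1 + a₀ * h * K₀₁)) := by
  refine ⟨coevoRHS_hostOnly_eq_zero hK₀₁.ne',
    coevoJac_hostOnly_charpoly hK₀₁ hK₀₂.ne' ha₀.le hh.le hσK₁.ne' hσK₂.ne' hσa.ne',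
    fun hlt => ⟨neg_neg_of_pos hr₁, by linarith, neg_neg_of_pos (by positivity),
      neg_neg_of_pos (by positivity)⟩,
    fun hgt => by linarith⟩

/-- (K₀₁, 0, 0, 0) is an equilibrium of the Gaussian co-evolutionary
model; the Jacobian there has eigenvalues −r₁, r₂ − d + ea₀K₀₁/(1 + a₀hK₀₁),
−r₁σ₁²/σK₁², −σ₂²ea₀K₀₁/(σa²(1 + a₀hK₀₁)²); sign consequences. -/
theorem coevo_hostOnly_equilibrium_jacobian
    (r₁ r₂ K₀₁ K₀₂ a₀ h e d σ₁ σ₂ σK₁ σK₂ σa : ℝ)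
    (hr₁ : 0 < r₁) (hr₂ : 0 < r₂) (hK₀₁ : 0 < K₀₁) (hK₀₂ : 0 < K₀₂)
    (ha₀ : 0 < a₀) (hh : 0 < h) (he : 0 < e) (hd : 0 ≤ d)
    (hσ₁ : 0 < σ₁) (hσ₂ : 0 < σ₂) (hσK₁ : 0 < σK₁) (hσK₂ : 0 < σK₂) (hσa : 0 < σa) :
    coevoRHS r₁ r₂ K₀₁ K₀₂ a₀ h e d σ₁ σ₂ σK₁ σK₂ σa (K₀₁, 0, 0, 0) = (0, 0, 0, 0) ∧
    (coevoJac (coevoRHS r₁ r₂ K₀₁ K₀₂ a₀ h e d σ₁ σ₂ σK₁ σK₂ σa)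
        (K₀₁, 0, 0, 0)).charpoly
      = (X - C (-r₁)) * (X - C (r₂ - d + e * a₀ * K₀₁ / (1 + a₀ * h * K₀₁)))
        * (X - C (-(r₁ * σ₁ ^ 2 / σK₁ ^ 2)))
        * (X - C (-(σ₂ ^ 2 * e * a₀ * K₀₁ / (σa ^ 2 * (1 + a₀ * h * K₀₁) ^ 2)))) ∧
    (r₂ + e * a₀ * K₀₁ / (1 + a₀ * h * K₀₁) < d →
      (-r₁ < 0 ∧ r₂ - d + e * a₀ * K₀₁ / (1 + a₀ * h * K₀₁) < 0 ∧
       -(r₁ * σ₁ ^ 2 / σK₁ ^ 2) < 0 ∧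
       -(σ₂ ^ 2 * e * a₀ * K₀₁ / (σa ^ 2 * (1 + a₀ * h * K₀₁) ^ 2)) < 0)) ∧
    (r₂ + e * a₀ * K₀₁ / (1 + a₀ * h * K₀₁) > d →
      0 < r₂ - d + e * a₀ * K₀₁ / (1 + a₀ * h * K₀₁)) :=
  coevo_hostOnly_equilibrium_jacobian_general r₁ r₂ K₀₁ K₀₂ a₀ h e d σ₁ σ₂ σK₁ σK₂ σa hr₁ hK₀₁ hK₀₂
    ha₀ hh he hσ₁ hσ₂ hσK₁ hσK₂ hσa
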